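/- arXiv:1504.05549 — 2 statements merged into one kernel-verified Lean document; each statement's English description precedes it below -/
import Mathlib

section
/- Let χ₂ be a Dirichlet character modulo q₂, q₁ a positive integer, W = lcm(q₁, q₂), and n₁ a unit modulo q₁. Let χ̃₂ (mod q̃₂) be the primitive character inducing χ₂. Then Σ over units b mod W with b ≡ inv(n₁) (mod q₁) of χ₂(b) equals (φ(q₂)/φ(gcd(q₁,q₂)))·χ̃₂(inv(n₁)) if q̃₂ divides gcd(q₁, q₂), and equals 0 otherwise. -/
/-!
The units `b mod W` with `b ≡ n₁⁻¹ (mod q₁)` form a coset of the kernel `K` of the reduction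
`(ZMod W)ˣ → (ZMod q₁)ˣ`. If the lift of `χ₂` to level `W` is trivial on `K`, i.e. factors through
level `q₁`, which happens exactly when its conductor divides `gcd(q₁, q₂)`, then it is constant on
the coset with value `χ̃₂(n₁⁻¹)`, and the coset has `φ(W)/φ(q₁) = φ(q₂)/φ(gcd(q₁, q₂))` elements.
Otherwise some `c ∈ K` has `χ₂(c) ≠ 1`; multiplication by `c` permutes the coset, so the sum `S`
satisfies `S = χ₂(c) S`, hence `S = 0`.
-/

open scoped Classical
open DirichletCharacter

theorem Nat.totient_lcm_mul_totient_gcd (a b : ℕ) :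
    (a.lcm b).totient * (a.gcd b).totient = a.totient * b.totient := by
  rcases (a.gcd b).eq_zero_or_pos with hg | hg
  · obtain ⟨rfl, rfl⟩ := Nat.gcd_eq_zero_iff.mp hg
    simp
  have key := Nat.totient_gcd_mul_totient_mul (a.lcm b) (a.gcd b)
  rw [Nat.gcd_eq_right ((a.gcd_dvd_left b).trans (a.dvd_lcm_left b)), mul_comm (a.lcm b),
    Nat.gcd_mul_lcm] at key
  exact Nat.eq_of_mul_eq_mul_right hg (key.symm.trans (Nat.totient_gcd_mul_totient_mul a b))

namespace MonoidHom

open Finset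

variable {G H : Type*} [Group G] [Fintype G] [Group H] [DecidableEq H]

theorem card_fiber_mul_card_of_surjective [Fintype H] (f : G →* H) (hf : Function.Surjective f)
    (y : H) : #{g | f g = y} * Fintype.card H = Fintype.card G := by
  calc #{g | f g = y} * Fintype.card H = ∑ z : H, #{g | f g = z} := by
        rw [sum_const_nat fun z _ => card_fiber_eq_of_mem_range f (hf z) (hf y), card_univ,
          mul_comm]
    _ = Fintype.card G := (card_eq_sum_card_fiberwise fun _ _ => mem_univ _).symm

theorem sum_fiber_eq_zero {R : Type*} [Semiring R] [IsRightCancelMulZero R]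
    (f : G →* H) (ψ : G →* R) {c : G} (hc : c ∈ f.ker) (hψc : ψ c ≠ 1) (y : H) :
    ∑ g with f g = y, ψ g = 0 := by
  refine eq_zero_of_mul_eq_self_left hψc ?_
  rw [sum_filter, mul_sum]
  exact Fintype.sum_equiv (Equiv.mulLeft c) _ _ fun g => by simp [mem_ker.mp hc, mul_ite]

end MonoidHom

open Finset in
theorem ZMod.card_unitsMap_fiber_mul_totient {m n : ℕ} [NeZero m] (h : n ∣ m) (u : (ZMod n)ˣ) :
    #{b | ZMod.unitsMap h b = u} * n.totient = m.totient := by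
  have : NeZero n := ⟨fun hn => NeZero.ne m (Nat.eq_zero_of_zero_dvd (hn ▸ h))⟩
  rw [← ZMod.card_units_eq_totient n, ← ZMod.card_units_eq_totient m]
  exact (ZMod.unitsMap h).card_fiber_mul_card_of_surjective (ZMod.unitsMap_surjective h) u

open Finset in
theorem ZMod.card_unitsMap_fiber_of_eq_lcm {q₁ q₂ W : ℕ} [NeZero W]
    (hW : W = q₁.lcm q₂) (h₁ : q₁ ∣ W) (u : (ZMod q₁)ˣ) :
    #{b | ZMod.unitsMap h₁ b = u} = q₂.totient / (q₁.gcd q₂).totient := by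
  have hq₁ : 0 < q₁ := Nat.pos_of_dvd_of_pos h₁ (Nat.pos_of_neZero W)
  have hφq₁ : 0 < q₁.totient := Nat.totient_pos.mpr hq₁
  have hφg : 0 < (q₁.gcd q₂).totient := Nat.totient_pos.mpr (Nat.gcd_pos_of_pos_left _ hq₁)
  refine (Nat.div_eq_of_eq_mul_left hφg (Nat.eq_of_mul_eq_mul_left hφq₁ ?_)).symm
  rw [← Nat.totient_lcm_mul_totient_gcd, ← hW, ← ZMod.card_unitsMap_fiber_mul_totient h₁ u]
  ring

namespace DirichletCharacter

variable {R : Type*} [CommMonoidWithZero R] {n m : ℕ}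

theorem factorsThrough_changeLevel_iff [NeZero m] (χ : DirichletCharacter R n) (hm : n ∣ m)
    {d : ℕ} (hd : d ∣ m) : FactorsThrough (changeLevel hm χ) d ↔ χ.conductor ∣ d.gcd n := by
  rw [← mem_conductorSet_iff, mem_conductorSet_iff_conductor_dvd _ hd, conductor_changeLevel,
    Nat.dvd_gcd_iff, and_iff_left χ.conductor_dvd_level]

theorem changeLevel_apply_eq_primitiveCharacter (χ : DirichletCharacter R n) (hm : n ∣ m)
    {d : ℕ} (hd : χ.conductor ∣ d) (hdm : d ∣ m) (a : (ZMod m)ˣ) :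
    changeLevel hm χ a =
      χ.primitiveCharacter (ZMod.castHom hd (ZMod χ.conductor) (ZMod.unitsMap hdm a : ZMod d)) := by
  have hχ : changeLevel hm χ = changeLevel hdm (changeLevel hd χ.primitiveCharacter) := by
    conv_lhs => rw [← χ.changeLevel_primitiveCharacter]
    rw [← changeLevel_trans, ← changeLevel_trans]
  rw [hχ, changeLevel_eq_cast_of_dvd, ← ZMod.unitsMap_val, changeLevel_eq_cast_of_dvd,
    ZMod.castHom_apply]

end DirichletCharacter

theorem stmt_15_general (q₁ q₂ W : ℕ) [NeZero W]
    (hW : W = Nat.lcm q₁ q₂) (h₁ : q₁ ∣ W) (h₂ : q₂ ∣ W)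
    (χ₂ : DirichletCharacter ℂ q₂) (n₁ : (ZMod q₁)ˣ) :
    (∑ b ∈ Finset.univ.filter
        (fun b : (ZMod W)ˣ =>
          ZMod.castHom h₁ (ZMod q₁) (b : ZMod W) = ((n₁⁻¹ : (ZMod q₁)ˣ) : ZMod q₁)),
        (changeLevel h₂ χ₂) (b : ZMod W))
      = if h : χ₂.conductor ∣ Nat.gcd q₁ q₂ then
          ((q₂.totient / (Nat.gcd q₁ q₂).totient : ℕ) : ℂ) *
            χ₂.primitiveCharacter
              (ZMod.castHom (h.trans (Nat.gcd_dvd_left q₁ q₂)) (ZMod χ₂.conductor)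
                ((n₁⁻¹ : (ZMod q₁)ˣ) : ZMod q₁))
        else 0 := by
  have hfiber (b : (ZMod W)ˣ) :
      ZMod.castHom h₁ (ZMod q₁) b = ((n₁⁻¹ : (ZMod q₁)ˣ) : ZMod q₁) ↔ ZMod.unitsMap h₁ b = n₁⁻¹ :=
    (Units.ext_iff (u := ZMod.unitsMap h₁ b)).symm
  rw [Finset.filter_congr fun b _ => hfiber b]
  split_ifs with hcond
  · rw [Finset.sum_congr rfl fun b hb => by
        rw [χ₂.changeLevel_apply_eq_primitiveCharacter h₂ (hcond.trans (q₁.gcd_dvd_left q₂)) h₁,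
          (Finset.mem_filter.mp hb).2],
      Finset.sum_const, nsmul_eq_mul, ZMod.card_unitsMap_fiber_of_eq_lcm hW]
  · obtain ⟨c, hc, hψc⟩ := SetLike.not_le_iff_exists.mp <|
      (factorsThrough_iff_ker_unitsMap h₁).not.mp <|
        (χ₂.factorsThrough_changeLevel_iff h₂ h₁).not.mpr hcond
    refine (ZMod.unitsMap h₁).sum_fiber_eq_zero
      ((changeLevel h₂ χ₂ : ZMod W →* ℂ).comp (Units.coeHom _)) hc ?_ n₁⁻¹
    rwa [MonoidHom.mem_ker, Units.ext_iff, MulChar.coe_toUnitHom] at hψc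

/-- Let `χ₂` be a Dirichlet character mod `q₂`, `W = lcm(q₁, q₂)`, `n₁` a unit mod
`q₁`, and `χ̃₂ mod q̃₂` the primitive character inducing `χ₂`. Then the sum of
`χ₂(b)` over units `b mod W` with `b ≡ n₁⁻¹ (mod q₁)` equals
`(φ(q₂)/φ(gcd(q₁,q₂)))·χ̃₂(n₁⁻¹)` if `q̃₂ ∣ gcd(q₁, q₂)`, and `0` otherwise. -/
theorem stmt_15 (q₁ q₂ W : ℕ) [NeZero q₁] [NeZero q₂] [NeZero W]
    (hW : W = Nat.lcm q₁ q₂) (h₁ : q₁ ∣ W) (h₂ : q₂ ∣ W)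
    (χ₂ : DirichletCharacter ℂ q₂) (n₁ : (ZMod q₁)ˣ) :
    (∑ b ∈ Finset.univ.filter
        (fun b : (ZMod W)ˣ =>
          ZMod.castHom h₁ (ZMod q₁) (b : ZMod W) = ((n₁⁻¹ : (ZMod q₁)ˣ) : ZMod q₁)),
        (changeLevel h₂ χ₂) (b : ZMod W))
      = if h : χ₂.conductor ∣ Nat.gcd q₁ q₂ then
          ((q₂.totient / (Nat.gcd q₁ q₂).totient : ℕ) : ℂ) *
            χ₂.primitiveCharacter
              (ZMod.castHom (h.trans (Nat.gcd_dvd_left q₁ q₂)) (ZMod χ₂.conductor)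
                ((n₁⁻¹ : (ZMod q₁)ˣ) : ZMod q₁))
        else 0 :=
  stmt_15_general q₁ q₂ W hW h₁ h₂ χ₂ n₁
end

section
/- Dirichlet hyperbola identity for the Titchmarsh divisor sum: for x ≥ 2, Σ_{1 < n ≤ x} Λ(n)·τ(n−1) = 2·Σ_{q ≤ √x} (ψ(x; q, 1) − ψ(q²; q, 1)) + O(√x · log x), where ψ(x; q, a) = Σ_{n ≤ x, n ≡ a (mod q)} Λ(n). -/
open Finset ArithmeticFunction

/-- `ψ(x; q, a) = ∑_{n ≤ x, n ≡ a (mod q)} Λ(n)`. -/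
noncomputable def psi (x : ℝ) (q a : ℕ) : ℝ :=
  ∑ n ∈ Finset.Icc 1 ⌊x⌋₊, if n % q = a % q then Λ n else 0

/-!
Write `τ(m) = 2·#{d ∣ m | d² ≤ m} − [m is a square]`. Summing `Λ(n)·#{d ∣ n − 1 | d² ≤ n − 1}` over
`n ≤ x` and swapping the order of summation gives exactly `∑_{q ≤ √x} (ψ(x; q, 1) − ψ(q²; q, 1))`,
so the error is the sum of `Λ(n)` over the `n = r² + 1 ≤ x`: at most `√x` terms, each at most `log x`.
-/

namespace Nat

theorem card_divisors_filter_le_sq_eq {m : ℕ} (hm : m ≠ 0) :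
    #{d ∈ m.divisors | m ≤ d ^ 2} = #{d ∈ m.divisors | d ^ 2 ≤ m} := by
  have hmaps : ∀ d ∈ m.divisors, m / d ∈ m.divisors ∧ (m ≤ d ^ 2 ↔ (m / d) ^ 2 ≤ m) := by
    intro d hd
    obtain ⟨⟨e, rfl⟩, hde⟩ := mem_divisors.mp hd
    have hd0 : 0 < d := pos_of_ne_zero (left_ne_zero_of_mul hde)
    rw [Nat.mul_div_cancel_left e hd0]
    refine ⟨mem_divisors.mpr ⟨dvd_mul_left e d, hde⟩, ?_⟩
    constructor <;> intro h <;> nlinarith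
  refine card_nbij' (m / ·) (m / ·) ?_ ?_ ?_ ?_
  · intro d hd
    simp only [coe_filter, Set.mem_ofPred_eq] at hd ⊢
    exact ⟨(hmaps d hd.1).1, (hmaps d hd.1).2.mp hd.2⟩
  · intro d hd
    simp only [coe_filter, Set.mem_ofPred_eq] at hd ⊢
    have h := (hmaps (m / d) (hmaps d hd.1).1).2
    rw [Nat.div_div_self (dvd_of_mem_divisors hd.1) hm] at h
    exact ⟨(hmaps d hd.1).1, h.mpr hd.2⟩
  all_goals
    intro d hd
    simp only [coe_filter, Set.mem_ofPred_eq] at hd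
    exact Nat.div_div_self (dvd_of_mem_divisors hd.1) hm

theorem card_divisors_filter_sq_eq {m : ℕ} (hm : m ≠ 0) :
    #{d ∈ m.divisors | d ^ 2 = m} = if IsSquare m then 1 else 0 := by
  split_ifs with hs
  · obtain ⟨r, rfl⟩ := hs
    rw [card_eq_one]
    refine ⟨r, eq_singleton_iff_unique_mem.mpr ⟨?_, ?_⟩⟩
    · simpa [sq] using hm
    · intro d hd
      exact Nat.mul_self_inj.mp (by simpa [sq] using (mem_filter.mp hd).2)
  · rw [Finset.card_eq_zero, filter_eq_empty_iff]
    exact fun d _ hd => hs ⟨d, by rw [← hd, sq]⟩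

/-- Pairing `d ↔ m / d` matches the divisors below `√m` with those above it, the square root itself
(if it is an integer) being counted on both sides. -/
theorem card_divisors_add_ite_isSquare {m : ℕ} (hm : m ≠ 0) :
    #m.divisors + (if IsSquare m then 1 else 0) = 2 * #{d ∈ m.divisors | d ^ 2 ≤ m} := by
  have hunion : {d ∈ m.divisors | d ^ 2 ≤ m} ∪ {d ∈ m.divisors | m ≤ d ^ 2} = m.divisors := by
    rw [← filter_or]
    exact filter_true_of_mem fun d _ => le_total _ _
  have hinter : {d ∈ m.divisors | d ^ 2 ≤ m} ∩ {d ∈ m.divisors | m ≤ d ^ 2}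
      = {d ∈ m.divisors | d ^ 2 = m} := by
    rw [← filter_and]
    exact filter_congr fun d _ => le_antisymm_iff.symm
  have := card_union_add_card_inter {d ∈ m.divisors | d ^ 2 ≤ m} {d ∈ m.divisors | m ≤ d ^ 2}
  rw [hunion, hinter, card_divisors_filter_sq_eq hm, card_divisors_filter_le_sq_eq hm] at this
  omega

theorem floor_sqrt_eq_sqrt_floor {x : ℝ} (hx : 0 ≤ x) : ⌊√x⌋₊ = Nat.sqrt ⌊x⌋₊ := by
  refine eq_of_forall_le_iff fun q => ?_
  rw [le_floor_iff (Real.sqrt_nonneg x), Real.le_sqrt (Nat.cast_nonneg q) hx, le_sqrt',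
    le_floor_iff hx, Nat.cast_pow]

end Nat

theorem psi_sub_psi {x y : ℝ} (hyx : y ≤ x) (q a : ℕ) :
    psi x q a - psi y q a = ∑ n ∈ Ioc ⌊y⌋₊ ⌊x⌋₊ with n % q = a % q, Λ n := by
  have hIcc : ∀ k, Icc 1 k = Ioc 0 k := Icc_add_one_left_eq_Ioc 0
  rw [sum_filter, psi, psi, hIcc, hIcc, sub_eq_iff_eq_add',
    sum_Ioc_consecutive _ (Nat.zero_le _) (Nat.floor_le_floor hyx)]

theorem sum_sqrt_sum_Ioc_sq_mod_eq_one {M : Type*} [AddCommMonoid M] (N : ℕ) (f : ℕ → M) :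
    ∑ q ∈ Icc 1 (Nat.sqrt N), ∑ n ∈ Ioc (q ^ 2) N with n % q = 1 % q, f n
      = ∑ n ∈ Icc 2 N, #{d ∈ (n - 1).divisors | d ^ 2 ≤ n - 1} • f n := by
  simp_rw [← sum_const]
  refine sum_comm' fun q n => ?_
  simp only [mem_Icc, mem_Ioc, mem_filter, Nat.mem_divisors, Nat.le_sqrt']
  constructor
  · rintro ⟨⟨hq, -⟩, ⟨hqn, hnN⟩, hmod⟩
    have : 1 ≤ q ^ 2 := Nat.one_le_pow _ _ hq
    refine ⟨⟨⟨(Nat.modEq_iff_dvd' (by omega)).mp hmod.symm, by omega⟩, by omega⟩, by omega, hnN⟩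
  · rintro ⟨⟨⟨hdvd, hn⟩, hqn⟩, -, hnN⟩
    have hq : q ≠ 0 := by rintro rfl; simp at hdvd; omega
    exact ⟨⟨by omega, by omega⟩, ⟨by omega, hnN⟩, ((Nat.modEq_iff_dvd' (by omega)).mpr hdvd).symm⟩

theorem card_filter_isSquare_sub_one_le (N : ℕ) :
    #{n ∈ Icc 2 N | IsSquare (n - 1)} ≤ Nat.sqrt N := by
  calc #{n ∈ Icc 2 N | IsSquare (n - 1)}
      ≤ #((Icc 1 (Nat.sqrt N)).image fun r => r * r + 1) := by
        refine card_le_card fun n hn => ?_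
        obtain ⟨hn, r, hr⟩ := mem_filter.mp hn
        rw [mem_Icc] at hn
        refine mem_image.mpr ⟨r, mem_Icc.mpr ⟨?_, Nat.le_sqrt.mpr (by omega)⟩, by omega⟩
        rcases r with _ | r <;> simp_all
        all_goals omega
    _ ≤ Nat.sqrt N := card_image_le.trans_eq (by simp)

theorem sum_vonMangoldt_filter_isSquare_sub_one_le (N : ℕ) :
    ∑ n ∈ Icc 2 N with IsSquare (n - 1), Λ n ≤ Nat.sqrt N * Real.log N := by
  calc ∑ n ∈ Icc 2 N with IsSquare (n - 1), Λ n
      ≤ #{n ∈ Icc 2 N | IsSquare (n - 1)} • Real.log N := by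
        refine sum_le_card_nsmul _ _ _ fun n hn => vonMangoldt_le_log.trans ?_
        have hn := mem_Icc.mp (mem_filter.mp hn).1
        exact Real.log_le_log (by norm_cast; omega) (by exact_mod_cast hn.2)
    _ ≤ Nat.sqrt N * Real.log N := by
        rw [nsmul_eq_mul]
        gcongr
        exact_mod_cast card_filter_isSquare_sub_one_le N

theorem sum_mul_card_divisors_sub_two_mul_sum {R : Type*} [CommRing R] (N : ℕ) (f : ℕ → R) :
    ∑ n ∈ Icc 2 N, f n * (#(n - 1).divisors : R)
        - 2 * ∑ n ∈ Icc 2 N, #{d ∈ (n - 1).divisors | d ^ 2 ≤ n - 1} • f n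
      = -∑ n ∈ Icc 2 N with IsSquare (n - 1), f n := by
  rw [mul_sum, ← sum_sub_distrib, sum_filter, ← sum_neg_distrib]
  refine sum_congr rfl fun n hn => ?_
  have hτ := Nat.card_divisors_add_ite_isSquare (m := n - 1) (by grind)
  apply_fun ((↑) : ℕ → R) at hτ
  push_cast at hτ
  split_ifs at hτ ⊢ <;> linear_combination f n * hτ

/-- Dirichlet hyperbola identity for the Titchmarsh divisor sum: for `x ≥ 2`,
`∑_{1 < n ≤ x} Λ(n)τ(n−1) = 2·∑_{q ≤ √x} (ψ(x; q, 1) − ψ(q²; q, 1)) + O(√x·log x)`. -/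
theorem stmt_16 :
    ∃ C : ℝ, 0 < C ∧ ∀ x : ℝ, 2 ≤ x →
      |(∑ n ∈ Finset.Icc 2 ⌊x⌋₊, Λ n * ((n - 1).divisors.card : ℝ))
          - 2 * ∑ q ∈ Finset.Icc 1 ⌊Real.sqrt x⌋₊, (psi x q 1 - psi ((q : ℝ) ^ 2) q 1)|
        ≤ C * Real.sqrt x * Real.log x := by
  refine ⟨1, one_pos, fun x hx => ?_⟩
  have hx0 : 0 ≤ x := by linarith
  have hN : (2 : ℝ) ≤ ⌊x⌋₊ := by exact_mod_cast Nat.le_floor (by exact_mod_cast hx)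
  have hpsi : ∑ q ∈ Icc 1 ⌊√x⌋₊, (psi x q 1 - psi ((q : ℝ) ^ 2) q 1)
      = ∑ n ∈ Icc 2 ⌊x⌋₊, #{d ∈ (n - 1).divisors | d ^ 2 ≤ n - 1} • Λ n := by
    rw [← sum_sqrt_sum_Ioc_sq_mod_eq_one, ← Nat.floor_sqrt_eq_sqrt_floor hx0]
    refine sum_congr rfl fun q hq => ?_
    have hqx : (q : ℝ) ^ 2 ≤ x := (Real.le_sqrt (Nat.cast_nonneg q) hx0).mp
      ((Nat.le_floor_iff (Real.sqrt_nonneg x)).mp (mem_Icc.mp hq).2)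
    rw [psi_sub_psi hqx, ← Nat.cast_pow, Nat.floor_natCast]
  rw [hpsi, sum_mul_card_divisors_sub_two_mul_sum, abs_neg,
    abs_of_nonneg (sum_nonneg fun n _ => vonMangoldt_nonneg)]
  calc ∑ n ∈ Icc 2 ⌊x⌋₊ with IsSquare (n - 1), Λ n
      ≤ Nat.sqrt ⌊x⌋₊ * Real.log ⌊x⌋₊ := sum_vonMangoldt_filter_isSquare_sub_one_le _
    _ ≤ √x * Real.log x := by
        rw [← Nat.floor_sqrt_eq_sqrt_floor hx0]
        exact mul_le_mul (Nat.floor_le (Real.sqrt_nonneg x))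
          (Real.log_le_log (by linarith) (Nat.floor_le hx0)) (Real.log_natCast_nonneg _)
          (Real.sqrt_nonneg x)
    _ = 1 * √x * Real.log x := by rw [one_mul]
end
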